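/- For every integer q ≥ 1 and ε ∈ ℝ, define the effective Hamiltonian H(x, y, z) = ψ_q(x, y) + ε·(y·sin z − x·cos z). Then the Q-flow vector field satisfies v = (∂H/∂y, −∂H/∂x, ψ_q), and v is a Cartan–Arnol'd system for the 2-form dα_q with pointwise value dα_q(u, w) = ψ_q·(u₂w₁ − u₁w₂) − (⟨∇H, u⟩·w₃ − ⟨∇H, w⟩·u₃) (the exterior derivative of α_q = (∫^y ψ_q dy) dx − H dz): at every point, dα_q(v, w) = 0 for all w ∈ ℝ³, i.e. ι_v dα_q = 0. -/

import Mathlib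

/-- The stream function of Zaslavsky's Q-flow:
`ψ_q(x, y) = Σ_{j=1}^{q} cos(x cos(2πj/q) + y sin(2πj/q))`. -/
noncomputable def psi (q : ℕ) (x y : ℝ) : ℝ :=
  ∑ j ∈ Finset.Icc 1 q,
    Real.cos (x * Real.cos (2 * Real.pi * j / q) + y * Real.sin (2 * Real.pi * j / q))

/-- The effective Hamiltonian of the Q-flow:
`H(x, y, z) = ψ_q(x, y) + ε (y sin z − x cos z)`. -/
noncomputable def Qham (q : ℕ) (ε : ℝ) (x y z : ℝ) : ℝ :=
  psi q x y + ε * (y * Real.sin z - x * Real.cos z)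

/-! The perturbation `ε (y sin z − x cos z)` is linear in `(x, y)`, so `v` is the planar
Hamiltonian field `(∂H/∂y, −∂H/∂x)` of `H`. For any gradient `(a, b, c)` and `v = (b, −a, ψ)` one
has `⟨∇H, v⟩ = c ψ`, and then `dα(v, w)` cancels identically in `w`. -/

lemma psi_differentiable_left (q : ℕ) (y : ℝ) : Differentiable ℝ (psi q · y) := by
  unfold psi
  fun_prop

lemma psi_differentiable_right (q : ℕ) (x : ℝ) : Differentiable ℝ (psi q x ·) := by
  unfold psi
  fun_prop

lemma hasDerivAt_Qham_left (q : ℕ) (ε x y z : ℝ) :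
    HasDerivAt (Qham q ε · y z) (deriv (psi q · y) x - ε * Real.cos z) x := by
  have hlin :
      HasDerivAt (fun s => ε * (y * Real.sin z - s * Real.cos z)) (ε * (0 - Real.cos z)) x := by
    simpa using (((hasDerivAt_id x).mul_const (Real.cos z)).const_sub _).const_mul ε
  exact ((psi_differentiable_left q y x).hasDerivAt.add hlin).congr_deriv (by ring)

lemma hasDerivAt_Qham_right (q : ℕ) (ε x y z : ℝ) :
    HasDerivAt (Qham q ε x · z) (deriv (psi q x ·) y + ε * Real.sin z) y := by
  have hlin : HasDerivAt (fun s => ε * (s * Real.sin z - x * Real.cos z)) (ε * Real.sin z) y := by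
    simpa using (((hasDerivAt_id y).mul_const (Real.sin z)).sub_const _).const_mul ε
  exact (psi_differentiable_right q x y).hasDerivAt.add hlin

lemma cartanArnold_form_hamiltonian_eq_zero (ψ a b c w₀ w₁ w₂ : ℝ) :
    ψ * (-a * w₀ - b * w₁) - ((a * b + b * -a + c * ψ) * w₂ - (a * w₀ + b * w₁ + c * w₂) * ψ)
      = 0 := by
  ring

theorem stmt15_general (q : ℕ) (ε : ℝ) (x y z : ℝ) :
    let Hx := deriv (fun s => Qham q ε s y z) x
    let Hy := deriv (fun s => Qham q ε x s z) y
    let Hz := deriv (fun s => Qham q ε x y s) z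
    let v1 := deriv (fun s => psi q x s) y + ε * Real.sin z
    let v2 := -(deriv (fun s => psi q s y) x) + ε * Real.cos z
    let v3 := psi q x y
    -- v = (∂H/∂y, −∂H/∂x, ψ_q)
    (v1 = Hy ∧ v2 = -Hx) ∧
    -- ι_v dα_q = 0
    (∀ w : Fin 3 → ℝ,
      psi q x y * (v2 * w 0 - v1 * w 1)
        - ((Hx * v1 + Hy * v2 + Hz * v3) * w 2
            - (Hx * w 0 + Hy * w 1 + Hz * w 2) * v3) = 0) := by
  intro Hx Hy Hz v1 v2 v3
  have hv1 : v1 = Hy := (hasDerivAt_Qham_right q ε x y z).deriv.symm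
  have hv2 : v2 = -Hx := by
    simp only [v2, Hx, (hasDerivAt_Qham_left q ε x y z).deriv]
    ring
  refine ⟨⟨hv1, hv2⟩, fun w => ?_⟩
  rw [hv1, hv2]
  exact cartanArnold_form_hamiltonian_eq_zero _ Hx Hy Hz _ _ _

/-- With `H(x, y, z) = ψ_q(x, y) + ε (y sin z − x cos z)`, the Q-flow vector
field `v = (∂ψ_q/∂y + ε sin z, −∂ψ_q/∂x + ε cos z, ψ_q)` satisfies `v = (∂H/∂y, −∂H/∂x, ψ_q)`,
and `v` is Cartan–Arnol'd for the 2-form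
`dα_q(u, w) = ψ_q (u₂w₁ − u₁w₂) − (⟨∇H, u⟩ w₃ − ⟨∇H, w⟩ u₃)`: at every point,
`dα_q(v, w) = 0` for all `w`, i.e. `ι_v dα_q = 0`. -/
theorem stmt15 (q : ℕ) (hq : 1 ≤ q) (ε : ℝ) (x y z : ℝ) :
    let Hx := deriv (fun s => Qham q ε s y z) x
    let Hy := deriv (fun s => Qham q ε x s z) y
    let Hz := deriv (fun s => Qham q ε x y s) z
    let v1 := deriv (fun s => psi q x s) y + ε * Real.sin z
    let v2 := -(deriv (fun s => psi q s y) x) + ε * Real.cos z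
    let v3 := psi q x y
    -- v = (∂H/∂y, −∂H/∂x, ψ_q)
    (v1 = Hy ∧ v2 = -Hx) ∧
    -- ι_v dα_q = 0
    (∀ w : Fin 3 → ℝ,
      psi q x y * (v2 * w 0 - v1 * w 1)
        - ((Hx * v1 + Hy * v2 + Hz * v3) * w 2
            - (Hx * w 0 + Hy * w 1 + Hz * w 2) * v3) = 0) :=
  stmt15_general q ε x y z
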